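/- Under the naïve semantics (with clauses (N⊥+), (N⊤−), (N∨+), (N∧−) replacing (⊥+), (⊤−), (∨+), (∧−)): (1) it is not the case that {⊥};∅ ⊩− χ for all χ; in fact there is an atom q with {⊥};∅ ⊮− q; (2) it is not the case that ∅;{⊤} ⊩+ χ for all χ; in fact there is an atom q with ∅;{⊤} ⊮+ q; (3) there exist a base B, formulas φ, ψ and an atom r such that ⊩+_B φ∨ψ, φ;∅ ⊩−_B r and ψ;∅ ⊩−_B r but ⊮−_B r; (4) there exist a base B, formulas φ, ψ and an atom r such that ⊩−_B φ∧ψ, ∅;φ ⊩+_B r and ∅;ψ ⊩+_B r but ⊮+_B r. -/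

import Mathlib

/-- Signs: `pos` for proof/assertion, `neg` for refutation/rejection. -/
inductive Sign where
  | pos
  | neg
deriving DecidableEq

/-- The dual of a sign. -/
def Sign.dual : Sign → Sign
  | .pos => .neg
  | .neg => .pos

/-- Formulas of the bilateral logic 2Int. -/
inductive Form where
  | atom : ℕ → Form
  | bot : Form
  | top : Form
  | and : Form → Form → Form
  | or : Form → Form → Form
  | imp : Form → Form → Form
  | coimp : Form → Form → Form
deriving DecidableEq

/-- A premise of an atomic rule: the sign required (proof or refutation), the premise atom,
and the sets of dischargeable atomic proof assumptions and refutation assumptions. -/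
structure Premise where
  sign : Sign
  concl : ℕ
  dischargePf : Set ℕ
  dischargeRf : Set ℕ

/-- An atomic rule: a list of premises, a marking as proof (`pos`) or refutation (`neg`) rule,
and an atomic conclusion. -/
structure AtomicRule where
  prems : List Premise
  sign : Sign
  concl : ℕ

/-- A bilateral atomic system (base) is a set of atomic rules. -/
abbrev Base := Set AtomicRule

/-- `AtDeriv B s Γ Δ p` formalizes `Γ;Δ ⊢^s_B p`: there is a deduction in `B` of the atom `p`
whose open atomic proof assumptions are contained in `Γ` and open atomic refutation
assumptions in `Δ`, consisting of a single assumption of sign `s` or ending with a rule of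
sign `s`. -/
inductive AtDeriv (B : Base) : Sign → Set ℕ → Set ℕ → ℕ → Prop
  | hypPos {Γ Δ : Set ℕ} {p : ℕ} : p ∈ Γ → AtDeriv B .pos Γ Δ p
  | hypNeg {Γ Δ : Set ℕ} {p : ℕ} : p ∈ Δ → AtDeriv B .neg Γ Δ p
  | app {Γ Δ : Set ℕ} {R : AtomicRule} (hR : R ∈ B)
      (h : ∀ pr ∈ R.prems,
        AtDeriv B pr.sign (Γ ∪ pr.dischargePf) (Δ ∪ pr.dischargeRf) pr.concl) :
      AtDeriv B R.sign Γ Δ R.concl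

/-- Naive bilateral validity, with clauses (N⊥+), (N⊤−), (N∨+), (N∧−). -/
def NSupp : Form → Base → Sign → Prop
  | .atom p, B, s => AtDeriv B s ∅ ∅ p
  | .bot, B, .pos => ∀ p : ℕ, AtDeriv B .pos ∅ ∅ p
  | .bot, _, .neg => True
  | .top, _, .pos => True
  | .top, B, .neg => ∀ p : ℕ, AtDeriv B .neg ∅ ∅ p
  | .and φ ψ, B, .pos => NSupp φ B .pos ∧ NSupp ψ B .pos
  | .and φ ψ, B, .neg => ∀ C : Base, B ⊆ C → ∀ p : ℕ,
      ((∀ D : Base, C ⊆ D → NSupp φ D .neg → AtDeriv D .neg ∅ ∅ p) ∧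
       (∀ D : Base, C ⊆ D → NSupp ψ D .neg → AtDeriv D .neg ∅ ∅ p)) →
      AtDeriv C .neg ∅ ∅ p
  | .or φ ψ, B, .pos => ∀ C : Base, B ⊆ C → ∀ p : ℕ,
      ((∀ D : Base, C ⊆ D → NSupp φ D .pos → AtDeriv D .pos ∅ ∅ p) ∧
       (∀ D : Base, C ⊆ D → NSupp ψ D .pos → AtDeriv D .pos ∅ ∅ p)) →
      AtDeriv C .pos ∅ ∅ p
  | .or φ ψ, B, .neg => NSupp φ B .neg ∧ NSupp ψ B .neg
  | .imp φ ψ, B, .pos => ∀ C : Base, B ⊆ C → NSupp φ C .pos → NSupp ψ C .pos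
  | .imp φ ψ, B, .neg => NSupp φ B .pos ∧ NSupp ψ B .neg
  | .coimp φ ψ, B, .pos => NSupp φ B .pos ∧ NSupp ψ B .neg
  | .coimp φ ψ, B, .neg => ∀ C : Base, B ⊆ C → NSupp ψ C .neg → NSupp φ C .neg

open Classical in
def NCons (B : Base) (Γ Δ : Set Form) (s : Sign) (χ : Form) : Prop :=
  if Γ = ∅ ∧ Δ = ∅ then NSupp χ B s
  else ∀ C : Base, B ⊆ C →
    (∀ φ ∈ Γ, NSupp φ C .pos) → (∀ ψ ∈ Δ, NSupp ψ C .neg) → NSupp χ C s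

def NValid (Γ Δ : Set Form) (s : Sign) (χ : Form) : Prop :=
  ∀ B : Base, NCons B Γ Δ s χ

/-!
Under the naive clauses, `⊥` is supported positively and `⊤` negatively as soon as every atom
is, so a base whose only rules are proof axioms `⊢⁺ p` (resp. refutation axioms `⊢⁻ p`)
supports `⊥` (resp. `⊤`) but derives no refutation (resp. proof) of any atom. The same base
supports `φ ∨ ψ` positively (resp. `φ ∧ ψ` negatively) for every `φ, ψ`, while `⊤ ↤ r`
(resp. `r → ⊥`) entails a refutation (resp. proof) of `r` in every base.
-/

def axiomRule (s : Sign) (p : ℕ) : AtomicRule := ⟨[], s, p⟩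

def allAxioms (s : Sign) : Base := Set.range (axiomRule s)

lemma atDeriv_of_allAxioms_subset {s : Sign} {C : Base} (hC : allAxioms s ⊆ C)
    (Γ Δ : Set ℕ) (p : ℕ) : AtDeriv C s Γ Δ p :=
  AtDeriv.app (R := axiomRule s p) (hC ⟨p, rfl⟩) (by simp [axiomRule])

lemma AtDeriv.mem_of_forall_sign_ne_neg {B : Base} {Γ Δ : Set ℕ} {q : ℕ}
    (hB : ∀ R ∈ B, R.sign ≠ .neg) (h : AtDeriv B .neg Γ Δ q) : q ∈ Δ := by
  generalize hs : Sign.neg = s at h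
  cases h with
  | hypPos => cases hs
  | hypNeg hq => exact hq
  | app hR => exact absurd hs.symm (hB _ hR)

lemma AtDeriv.mem_of_forall_sign_ne_pos {B : Base} {Γ Δ : Set ℕ} {q : ℕ}
    (hB : ∀ R ∈ B, R.sign ≠ .pos) (h : AtDeriv B .pos Γ Δ q) : q ∈ Γ := by
  generalize hs : Sign.pos = s at h
  cases h with
  | hypNeg => cases hs
  | hypPos hq => exact hq
  | app hR => exact absurd hs.symm (hB _ hR)

lemma not_atDeriv_allAxioms_pos_neg (Γ : Set ℕ) (q : ℕ) :
    ¬ AtDeriv (allAxioms .pos) .neg Γ ∅ q :=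
  fun h ↦ h.mem_of_forall_sign_ne_neg (by rintro _ ⟨p, rfl⟩; simp [axiomRule])

lemma not_atDeriv_allAxioms_neg_pos (Δ : Set ℕ) (q : ℕ) :
    ¬ AtDeriv (allAxioms .neg) .pos ∅ Δ q :=
  fun h ↦ h.mem_of_forall_sign_ne_pos (by rintro _ ⟨p, rfl⟩; simp [axiomRule])

lemma nCons_singleton_empty_iff (B : Base) (φ : Form) (s : Sign) (χ : Form) :
    NCons B {φ} ∅ s χ ↔ ∀ C : Base, B ⊆ C → NSupp φ C .pos → NSupp χ C s := by
  simp [NCons]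

lemma nCons_empty_singleton_iff (B : Base) (ψ : Form) (s : Sign) (χ : Form) :
    NCons B ∅ {ψ} s χ ↔ ∀ C : Base, B ⊆ C → NSupp ψ C .neg → NSupp χ C s := by
  simp [NCons]

lemma not_nValid_bot_neg_atom (q : ℕ) : ¬ NValid {Form.bot} ∅ .neg (.atom q) := by
  intro h
  have hbot : NSupp .bot (allAxioms .pos) .pos :=
    atDeriv_of_allAxioms_subset subset_rfl ∅ ∅
  exact not_atDeriv_allAxioms_pos_neg ∅ q
    ((nCons_singleton_empty_iff _ _ _ _).1 (h _) _ subset_rfl hbot)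

lemma not_nValid_top_pos_atom (q : ℕ) : ¬ NValid ∅ {Form.top} .pos (.atom q) := by
  intro h
  have htop : NSupp .top (allAxioms .neg) .neg :=
    atDeriv_of_allAxioms_subset subset_rfl ∅ ∅
  exact not_atDeriv_allAxioms_neg_pos ∅ q
    ((nCons_empty_singleton_iff _ _ _ _).1 (h _) _ subset_rfl htop)

lemma exists_nSupp_or_pos_not_neg_elim (r : ℕ) :
    ∃ (B : Base) (φ ψ : Form),
      NSupp (φ.or ψ) B .pos ∧ NCons B {φ} ∅ .neg (.atom r) ∧
        NCons B {ψ} ∅ .neg (.atom r) ∧ ¬ NSupp (.atom r) B .neg := by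
  have hφ : NCons (allAxioms .pos) {Form.top.coimp (.atom r)} ∅ .neg (.atom r) :=
    (nCons_singleton_empty_iff _ _ _ _).2 fun _ _ h ↦ h.2
  exact ⟨allAxioms .pos, _, _,
    fun _ hC p _ ↦ atDeriv_of_allAxioms_subset hC ∅ ∅ p, hφ, hφ,
    not_atDeriv_allAxioms_pos_neg ∅ r⟩

lemma exists_nSupp_and_neg_not_pos_elim (r : ℕ) :
    ∃ (B : Base) (φ ψ : Form),
      NSupp (φ.and ψ) B .neg ∧ NCons B ∅ {φ} .pos (.atom r) ∧
        NCons B ∅ {ψ} .pos (.atom r) ∧ ¬ NSupp (.atom r) B .pos := by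
  have hφ : NCons (allAxioms .neg) ∅ {(Form.atom r).imp .bot} .pos (.atom r) :=
    (nCons_empty_singleton_iff _ _ _ _).2 fun _ _ h ↦ h.1
  exact ⟨allAxioms .neg, _, _,
    fun _ hC p _ ↦ atDeriv_of_allAxioms_subset hC ∅ ∅ p, hφ, hφ,
    not_atDeriv_allAxioms_neg_pos ∅ r⟩

theorem naive_semantics_failures :
    ((¬ ∀ χ : Form, NValid {Form.bot} ∅ .neg χ) ∧
      ∃ q : ℕ, ¬ NValid {Form.bot} ∅ .neg (.atom q)) ∧
    ((¬ ∀ χ : Form, NValid ∅ {Form.top} .pos χ) ∧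
      ∃ q : ℕ, ¬ NValid ∅ {Form.top} .pos (.atom q)) ∧
    (∃ (B : Base) (φ ψ : Form) (r : ℕ),
        NSupp (φ.or ψ) B .pos ∧ NCons B {φ} ∅ .neg (.atom r) ∧
        NCons B {ψ} ∅ .neg (.atom r) ∧ ¬ NSupp (.atom r) B .neg) ∧
    (∃ (B : Base) (φ ψ : Form) (r : ℕ),
        NSupp (φ.and ψ) B .neg ∧ NCons B ∅ {φ} .pos (.atom r) ∧
        NCons B ∅ {ψ} .pos (.atom r) ∧ ¬ NSupp (.atom r) B .pos) := by
  obtain ⟨B₃, φ₃, ψ₃, h₃⟩ := exists_nSupp_or_pos_not_neg_elim 0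
  obtain ⟨B₄, φ₄, ψ₄, h₄⟩ := exists_nSupp_and_neg_not_pos_elim 0
  exact ⟨⟨fun h ↦ not_nValid_bot_neg_atom 0 (h _), 0, not_nValid_bot_neg_atom 0⟩,
    ⟨fun h ↦ not_nValid_top_pos_atom 0 (h _), 0, not_nValid_top_pos_atom 0⟩,
    ⟨B₃, φ₃, ψ₃, 0, h₃⟩, ⟨B₄, φ₄, ψ₄, 0, h₄⟩⟩
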